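/- Let v : [0,T] × ℝ^d → ℝ be continuously differentiable in t, with v(t,·) ∈ C₀(ℝ^d) for each t (continuous functions vanishing at infinity). Fix t₀ ∈ (0,T] and let x₀ ∈ ℝ^d be a point where |v(t₀,x₀)| = sup_x |v(t₀,x)|. Then the upper-left-derivative of the map t ↦ sup_x |v(t,x)| at t₀ is bounded above by (∂v/∂t)(t₀,x₀) · sign(v(t₀,x₀)). -/

import Mathlib

/-! The function `s ↦ sign (v t₀ x₀) * v s x₀` stays below `s ↦ sup_x |v s x|` and touches it
at `t₀`, so the left difference quotients of the supremum at `t₀` are dominated by those of this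
differentiable barrier, which converge to `sign (v t₀ x₀) * ∂ₜv (t₀, x₀)`. -/

open Filter

/-- The upper-left-derivative `D⁻φ(t) = limsup_{h ↓ 0} (φ(t) - φ(t-h))/h`, valued in `EReal`. -/
noncomputable def upperLeftDeriv (φ : ℝ → ℝ) (t : ℝ) : EReal :=
  Filter.limsup (fun h : ℝ => (((φ t - φ (t - h)) / h : ℝ) : EReal)) (nhdsWithin 0 (Set.Ioi 0))

open Set Topology

lemma Real.sign_mul_self (a : ℝ) : Real.sign a * a = |a| := by
  rcases lt_trichotomy a 0 with h | rfl | h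
  · rw [Real.sign_of_neg h, abs_of_neg h, neg_one_mul]
  · simp
  · rw [Real.sign_of_pos h, abs_of_pos h, one_mul]

lemma Real.sign_mul_le_abs (a b : ℝ) : Real.sign a * b ≤ |b| := by
  rcases Real.sign_apply_eq a with h | h | h <;> rw [h]
  · simpa using neg_le_abs b
  · simp
  · simpa using le_abs_self b

lemma bddAbove_range_abs_of_tendsto_cocompact {α : Type*} [TopologicalSpace α] {f : α → ℝ}
    (hf : Continuous f) (hf_zero : Tendsto f (cocompact α) (𝓝 0)) :
    BddAbove (range fun x => |f x|) := by
  let F : ZeroAtInftyContinuousMap α ℝ := ⟨⟨f, hf⟩, hf_zero⟩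
  obtain ⟨C, hC⟩ := isBounded_iff_forall_norm_le.1 F.isBounded_range
  exact ⟨C, by rintro _ ⟨x, rfl⟩; exact hC (f x) ⟨x, rfl⟩⟩

lemma tendsto_const_sub_nhdsGT_zero (t : ℝ) :
    Tendsto (fun h : ℝ => t - h) (𝓝[>] 0) (𝓝[<] t) := by
  refine tendsto_nhdsWithin_iff.2 ⟨?_, ?_⟩
  · have : Tendsto (fun h : ℝ => t - h) (𝓝 0) (𝓝 t) := by
      simpa using (continuous_sub_left t).tendsto 0
    exact this.mono_left nhdsWithin_le_nhds
  · filter_upwards [self_mem_nhdsWithin] with h (hh : 0 < h)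
    exact sub_lt_self t hh

lemma upperLeftDeriv_eq_of_hasDerivAt {ψ : ℝ → ℝ} {L t : ℝ} (hψ : HasDerivAt ψ L t) :
    upperLeftDeriv ψ t = L := by
  have hslope : Tendsto (fun h => (ψ t - ψ (t - h)) / h) (𝓝[>] 0) (𝓝 L) := by
    refine ((hasDerivAt_iff_tendsto_slope.1 hψ).comp
      ((tendsto_const_sub_nhdsGT_zero t).mono_right (nhdsLT_le_nhdsNE t))).congr fun h => ?_
    simp only [Function.comp_apply, slope_def_field]
    rw [sub_sub_cancel_left, div_neg, ← neg_div, neg_sub]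
  exact (EReal.tendsto_coe.2 hslope).limsup_eq

lemma upperLeftDeriv_le_of_eventually_le {φ ψ : ℝ → ℝ} {t : ℝ} (ht : φ t ≤ ψ t)
    (hψφ : ∀ᶠ s in 𝓝[<] t, ψ s ≤ φ s) : upperLeftDeriv φ t ≤ upperLeftDeriv ψ t := by
  refine limsup_le_limsup ?_
  filter_upwards [self_mem_nhdsWithin, tendsto_const_sub_nhdsGT_zero t hψφ]
    with h (hh : 0 < h) (hle : ψ (t - h) ≤ φ (t - h))
  rw [EReal.coe_le_coe_iff]
  gcongr

theorem stmt3_general (d : ℕ) (T t₀ : ℝ) (ht₀ : 0 < t₀) (ht₀T : t₀ ≤ T)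
    (v vt : ℝ → EuclideanSpace ℝ (Fin d) → ℝ)
    (hderiv : ∀ x, ∀ t ∈ Set.Icc 0 T, HasDerivAt (fun s => v s x) (vt t x) t)
    (hC0cont : ∀ t ∈ Set.Icc (0 : ℝ) T, Continuous (v t))
    (hC0zero : ∀ t ∈ Set.Icc (0 : ℝ) T,
      Filter.Tendsto (v t) (Filter.cocompact (EuclideanSpace ℝ (Fin d))) (nhds 0))
    (x₀ : EuclideanSpace ℝ (Fin d))
    (hx₀ : |v t₀ x₀| = ⨆ x, |v t₀ x|) :
    upperLeftDeriv (fun t => ⨆ x, |v t x|) t₀ ≤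
      ((vt t₀ x₀ * Real.sign (v t₀ x₀) : ℝ) : EReal) := by
  set σ := Real.sign (v t₀ x₀)
  have hbarrier : ∀ᶠ s in 𝓝[<] t₀, σ * v s x₀ ≤ ⨆ x, |v s x| := by
    filter_upwards [Ioo_mem_nhdsLT ht₀] with s hs
    have hsI : s ∈ Icc 0 T := ⟨hs.1.le, hs.2.le.trans ht₀T⟩
    exact (Real.sign_mul_le_abs _ _).trans
      (le_ciSup (bddAbove_range_abs_of_tendsto_cocompact (hC0cont s hsI) (hC0zero s hsI)) x₀)
  have hσv : HasDerivAt (fun s => σ * v s x₀) (σ * vt t₀ x₀) t₀ :=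
    (hderiv x₀ t₀ ⟨ht₀.le, ht₀T⟩).const_mul σ
  calc upperLeftDeriv (fun t => ⨆ x, |v t x|) t₀
      ≤ upperLeftDeriv (fun s => σ * v s x₀) t₀ :=
        upperLeftDeriv_le_of_eventually_le (by simp only [σ, Real.sign_mul_self, hx₀, le_refl])
          hbarrier
    _ = ((vt t₀ x₀ * σ : ℝ) : EReal) := by rw [upperLeftDeriv_eq_of_hasDerivAt hσv, mul_comm]

theorem stmt3 (d : ℕ) (T t₀ : ℝ) (hT : 0 < T) (ht₀ : 0 < t₀) (ht₀T : t₀ ≤ T)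
    (v vt : ℝ → EuclideanSpace ℝ (Fin d) → ℝ)
    (hderiv : ∀ x, ∀ t ∈ Set.Icc 0 T, HasDerivAt (fun s => v s x) (vt t x) t)
    (hvtcont : Continuous fun p : ℝ × EuclideanSpace ℝ (Fin d) => vt p.1 p.2)
    (hC0cont : ∀ t ∈ Set.Icc (0 : ℝ) T, Continuous (v t))
    (hC0zero : ∀ t ∈ Set.Icc (0 : ℝ) T,
      Filter.Tendsto (v t) (Filter.cocompact (EuclideanSpace ℝ (Fin d))) (nhds 0))
    (x₀ : EuclideanSpace ℝ (Fin d))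
    (hx₀ : |v t₀ x₀| = ⨆ x, |v t₀ x|) :
    upperLeftDeriv (fun t => ⨆ x, |v t x|) t₀ ≤
      ((vt t₀ x₀ * Real.sign (v t₀ x₀) : ℝ) : EReal) :=
  stmt3_general d T t₀ ht₀ ht₀T v vt hderiv hC0cont hC0zero x₀ hx₀
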